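/- arXiv:2101.06722 — 2 statements merged into one kernel-verified Lean document; each statement's English description precedes it below -/
import Mathlib

section
/- Let P be a good-path between columns g_i and g_j in the x-type graph G_x(G) of an HG-matrix G, and suppose {g_i, g_j} is not a pair-type edge. Then neither the pair-partner of g_i nor the pair-partner of g_j lies on P. -/
/-- A good-path in the `x`-type graph `G_x(G)` of an HG-matrix `G` (columns indexed by
`Fin (2^s)`, pairs being the columns `2t` and `2t+1`, i.e. columns with equal `·/2`).
It is a simple path `g_{s_0} − ⋯ − g_{s_{len−1}}` on the columns, whose edges carry
alternating types (`true` = `x`-type edge `{g, g+x}`, `false` = pair-type edge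
`{g_{2t}, g_{2t+1}}`), with both the first and the last edge of `x`-type. -/
structure GoodPath (s : ℕ) (G : Fin (2 ^ s) → Fin s → ZMod 2)
    (x : Fin s → ZMod 2) where
  /-- number of vertices on the path -/
  len : ℕ
  two_le : 2 ≤ len
  /-- the column indices `s_0, …, s_{len-1}` of the vertices along the path -/
  idx : ℕ → Fin (2 ^ s)
  /-- the path is simple -/
  inj : ∀ ⦃j k⦄, j < len → k < len → idx j = idx k → j = k
  /-- the type of each edge: `true` for `x`-type, `false` for pair-type -/
  ty : ℕ → Bool
  /-- edge types alternate along the path -/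
  alt : ∀ j, j + 2 < len → ty (j + 1) = !ty j
  /-- the first edge is an `x`-type edge -/
  first : ty 0 = true
  /-- the last edge is an `x`-type edge -/
  last : ty (len - 2) = true
  /-- an `x`-type edge joins `g` to `g + x` -/
  xedge : ∀ j, j + 1 < len → ty j = true → G (idx (j + 1)) = G (idx j) + x
  /-- a pair-type edge joins the two distinct columns `2t` and `2t+1` -/
  pedge : ∀ j, j + 1 < len → ty j = false →
    (idx j).val / 2 = (idx (j + 1)).val / 2 ∧ idx j ≠ idx (j + 1)

/-- The pair-partner of a column index: `2t ↦ 2t+1` and `2t+1 ↦ 2t`. -/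
def pairPartner (r : ℕ) : ℕ := if r % 2 = 0 then r + 1 else r - 1


/-! Since edge types alternate and both end edges are `x`-type, every interior vertex of a
good-path lies on a pair-type edge of the path, whose other end is its pair-partner, while
the two end vertices lie on none. So if the partner of an end vertex `g` sat at an interior
vertex, the pair edge there would lead back to `g`. It cannot be `g` itself, nor, as
`{g_i, g_j}` is not a pair, the other end vertex. -/

theorem eq_pairPartner_iff {a b : ℕ} : b = pairPartner a ↔ b / 2 = a / 2 ∧ b ≠ a := by
  unfold pairPartner; split <;> omega

theorem pairPartner_involutive : Function.Involutive pairPartner := by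
  intro a; unfold pairPartner; split <;> split <;> omega

namespace GoodPath

variable {s : ℕ} {G : Fin (2 ^ s) → Fin s → ZMod 2} {x : Fin s → ZMod 2} (P : GoodPath s G x)

theorem val_idx_succ_eq_pairPartner {e : ℕ} (he : e + 1 < P.len) (hty : P.ty e = false) :
    (P.idx (e + 1)).val = pairPartner (P.idx e).val := by
  obtain ⟨hdiv, hne⟩ := P.pedge e he hty
  exact eq_pairPartner_iff.2 ⟨hdiv.symm, fun h => hne (Fin.ext h.symm)⟩

theorem pos_and_add_two_lt_of_ty_eq_false {e : ℕ} (he : e + 1 < P.len)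
    (hty : P.ty e = false) : 0 < e ∧ e + 2 < P.len := by
  refine ⟨Nat.pos_of_ne_zero fun h => ?_, ?_⟩
  · simp [h, P.first] at hty
  · by_contra! hlen
    have : e = P.len - 2 := by omega
    simp [this, P.last] at hty

theorem exists_ty_eq_false_of_interior {m : ℕ} (hm0 : 0 < m) (hm : m + 1 < P.len) :
    ∃ e, e + 1 < P.len ∧ P.ty e = false ∧ (e = m ∨ e + 1 = m) := by
  obtain ⟨k, rfl⟩ : ∃ k, m = k + 1 := ⟨m - 1, by omega⟩
  cases hk : P.ty k with
  | false => exact ⟨k, by omega, hk, Or.inr rfl⟩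
  | true => exact ⟨k + 1, hm, by simp [P.alt k hm, hk], Or.inl rfl⟩

theorem eq_zero_or_eq_len_sub_one_of_eq_pairPartner {m t : ℕ} (hm : m < P.len)
    (ht : t = 0 ∨ t = P.len - 1) (h : (P.idx m).val = pairPartner (P.idx t).val) :
    m = 0 ∨ m = P.len - 1 := by
  have hlen := P.two_le
  have htlen : t < P.len := by omega
  by_contra! ⟨hm0, hm1⟩
  obtain ⟨e, he, hty, hem⟩ := P.exists_ty_eq_false_of_interior (m := m) (by omega) (by omega)
  have hstep := P.val_idx_succ_eq_pairPartner he hty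
  have het : e = t ∨ e + 1 = t := by
    rcases hem with rfl | rfl
    · rw [h, pairPartner_involutive] at hstep
      exact Or.inr (P.inj he htlen (Fin.ext hstep))
    · exact Or.inl (P.inj (by omega) htlen
        (Fin.ext (pairPartner_involutive.injective (hstep.symm.trans h))))
  have := P.pos_and_add_two_lt_of_ty_eq_false he hty
  omega

end GoodPath

theorem goodPath_partners_not_on_path_general (s : ℕ) (G : Fin (2 ^ s) → Fin s → ZMod 2)
    (x : Fin s → ZMod 2) (P : GoodPath s G x)
    (hnp : (P.idx 0).val / 2 ≠ (P.idx (P.len - 1)).val / 2) :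
    ∀ m < P.len, (P.idx m).val ≠ pairPartner (P.idx 0).val ∧
      (P.idx m).val ≠ pairPartner (P.idx (P.len - 1)).val := by
  intro m hm
  refine ⟨fun h => ?_, fun h => ?_⟩
  all_goals
    obtain ⟨hdiv, hne⟩ := eq_pairPartner_iff.mp h
    rcases P.eq_zero_or_eq_len_sub_one_of_eq_pairPartner hm (by simp) h with rfl | rfl
  · exact hne rfl
  · exact hnp hdiv.symm
  · exact hnp hdiv
  · exact hne rfl

/-- If `P` is a good-path between columns `g_i = g_{s_0}` and `g_j = g_{s_{len-1}}`
of an HG-matrix and `g_i, g_j` are not a pair, then neither the pair-partner of `g_i`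
nor the pair-partner of `g_j` lies on `P`. -/
theorem goodPath_partners_not_on_path (s : ℕ) (G : Fin (2 ^ s) → Fin s → ZMod 2)
    (hG : Function.Bijective G) (x : Fin s → ZMod 2) (P : GoodPath s G x)
    (hnp : (P.idx 0).val / 2 ≠ (P.idx (P.len - 1)).val / 2) :
    ∀ m < P.len, (P.idx m).val ≠ pairPartner (P.idx 0).val ∧
      (P.idx m).val ≠ pairPartner (P.idx (P.len - 1)).val :=
  goodPath_partners_not_on_path_general s G x P hnp
end

section
/- Let G be an HG-matrix and P a good-path g_{s_0}−⋯−g_{s_{ℓ−1}} in G_x(G). Adding x to every column g_{s_m}, m ∈ [ℓ], yields again an HG-matrix; moreover this operation equals swapping the columns g_{s_{2t}} and g_{s_{2t+1}} for all t ∈ [ℓ/2]. -/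
/-!
Along a good-path the edge types alternate, starting and ending with an `x`-type edge, so the
path has an even number of vertices and its `x`-type edges are exactly `{g_{s_{2t}}, g_{s_{2t+1}}}`.
Since `x + x = 0`, adding `x` exchanges the values at `s_{2t}` and `s_{2t+1}`, and the set of
values on the path is stable under `· + x`; that stability alone keeps the modified column map
injective, hence bijective by counting.
-/

open Function

theorem Function.Injective.ite_add {α V : Type*} [AddGroup V] {f : α → V} (hf : Injective f)
    {p : α → Prop} [DecidablePred p] {x : V} (hp : ∀ a, p a → ∃ b, p b ∧ f a + x = f b) :
    Injective fun c => if p c then f c + x else f c := by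
  have mixed : ∀ a b, p a → ¬ p b → f a + x ≠ f b := by
    intro a b ha hb hab
    obtain ⟨c, hc, hac⟩ := hp a ha
    exact hb (hf (hac.symm.trans hab) ▸ hc)
  intro a b hab
  by_cases ha : p a <;> by_cases hb : p b <;> simp only [ha, hb, if_true, if_false] at hab
  · exact hf (add_right_cancel hab)
  · exact absurd hab (mixed a b ha hb)
  · exact absurd hab.symm (mixed b a hb ha)
  · exact hf hab

theorem Function.Bijective.ite_add {α V : Type*} [AddGroup V] [Finite V] {f : α → V}
    (hf : Bijective f) {p : α → Prop} [DecidablePred p] {x : V}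
    (hp : ∀ a, p a → ∃ b, p b ∧ f a + x = f b) :
    Bijective fun c => if p c then f c + x else f c :=
  (hf.injective.ite_add hp).bijective_of_nat_card_le (Nat.card_congr (Equiv.ofBijective f hf)).ge

namespace GoodPath

variable {s : ℕ} {G : Fin (2 ^ s) → Fin s → ZMod 2} {x : Fin s → ZMod 2} (P : GoodPath s G x)

theorem ty_eq_decide_even (j : ℕ) (hj : j + 1 < P.len) : P.ty j = decide (Even j) := by
  induction j with
  | zero => simp [P.first]
  | succ j ih =>
    rw [P.alt j hj, ih (by omega)]
    simp only [Nat.even_add_one, decide_not]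

theorem even_len : Even P.len := by
  have h := P.ty_eq_decide_even (P.len - 2) (by have := P.two_le; omega)
  rw [P.last, eq_comm, decide_eq_true_iff] at h
  simpa [Nat.sub_add_cancel P.two_le] using h.add even_two

theorem apply_idx_two_mul_add_one {t : ℕ} (ht : 2 * t + 1 < P.len) :
    G (P.idx (2 * t + 1)) = G (P.idx (2 * t)) + x :=
  P.xedge (2 * t) ht (by simp [P.ty_eq_decide_even (2 * t) ht])

theorem exists_apply_idx_add {m : ℕ} (hm : m < P.len) :
    ∃ m', m' < P.len ∧ G (P.idx m) + x = G (P.idx m') := by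
  obtain ⟨t, rfl | rfl⟩ := Nat.even_or_odd' m
  · have ht : 2 * t + 1 < P.len := by
      obtain ⟨k, hk⟩ := P.even_len; omega
    exact ⟨2 * t + 1, ht, (P.apply_idx_two_mul_add_one ht).symm⟩
  · refine ⟨2 * t, by omega, ?_⟩
    rw [P.apply_idx_two_mul_add_one hm, add_assoc, ZModModule.add_self, add_zero]

end GoodPath

open Classical in
/-- Adding `x` to every column lying on a good-path of the `x`-type graph of an
HG-matrix yields again an HG-matrix (the column map is still a bijection onto `F_2^s`);
moreover this operation equals swapping the columns `g_{s_{2t}}` and `g_{s_{2t+1}}`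
for all `t ∈ [ℓ/2]`. -/
theorem reorder_goodPath_HG (s : ℕ) (G : Fin (2 ^ s) → Fin s → ZMod 2)
    (hG : Function.Bijective G) (x : Fin s → ZMod 2) (P : GoodPath s G x)
    (G' : Fin (2 ^ s) → Fin s → ZMod 2)
    (hG' : ∀ c, G' c = if ∃ m, m < P.len ∧ P.idx m = c then G c + x else G c) :
    Function.Bijective G' ∧
    ∀ t, 2 * t + 1 < P.len →
      G' (P.idx (2 * t)) = G (P.idx (2 * t + 1)) ∧
      G' (P.idx (2 * t + 1)) = G (P.idx (2 * t)) := by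
  refine ⟨funext hG' ▸ hG.ite_add ?_, fun t ht => ⟨?_, ?_⟩⟩
  · rintro _ ⟨m, hm, rfl⟩
    obtain ⟨m', hm', hxm⟩ := P.exists_apply_idx_add hm
    exact ⟨P.idx m', ⟨m', hm', rfl⟩, hxm⟩
  · rw [hG', if_pos ⟨2 * t, by omega, rfl⟩, P.apply_idx_two_mul_add_one ht]
  · rw [hG', if_pos ⟨2 * t + 1, ht, rfl⟩, P.apply_idx_two_mul_add_one ht, add_assoc,
      ZModModule.add_self, add_zero]
end
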